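/- Let p, q be primes with q dividing (p^p-1)/(p-1), and let M in GL_p(F_p) have order q. Every element A of the normaliser of ⟨M⟩ in GL_p(F_p) satisfies A M A^{-1} = M^{p^j} for some j with 0 ≤ j < p. -/

import Mathlib

/-!
Over an algebraic closure `K` of `𝔽_p`, `M` has an eigenvalue `ζ ≠ 1`: otherwise `M - 1` is
nilpotent and `M ^ p ^ p = 1`, which is impossible for an element of order `q ≠ p`. So `ζ` has
order `q`. The characteristic polynomial of `M` has coefficients in `𝔽_p`, so its roots are
closed under `x ↦ x ^ p`, and since `p` has order `p` modulo `q`, the powers `ζ ^ p ^ j` with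
`j < p` are `p` distinct eigenvalues, i.e. all of them. Finally `ζ ^ k` is an eigenvalue of
`M ^ k = A * M * A⁻¹`, which has the eigenvalues of `M`; hence `k ≡ p ^ j [MOD q]`.
-/

open Polynomial

theorem Nat.not_dvd_geom_sum_self {p n : ℕ} (hp : p ≠ 1) (hn : n ≠ 0) :
    ¬ p ∣ ∑ i ∈ Finset.range n, p ^ i := by
  obtain ⟨n, rfl⟩ := Nat.exists_eq_succ_of_ne_zero hn
  rwa [Finset.sum_range_succ', pow_zero,
    Nat.dvd_add_right (Finset.dvd_sum fun i _ => dvd_pow_self p i.succ_ne_zero), Nat.dvd_one]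

theorem ZMod.orderOf_natCast_eq_of_dvd_geom_sum {p q : ℕ} (hp : p.Prime) [Fact (1 < q)]
    (hdvd : q ∣ ∑ i ∈ Finset.range p, p ^ i) : orderOf (p : ZMod q) = p := by
  have hsum : ∑ i ∈ Finset.range p, (p : ZMod q) ^ i = 0 := by
    exact_mod_cast (ZMod.natCast_eq_zero_iff _ _).2 hdvd
  have hpow : (p : ZMod q) ^ p = 1 := by
    rw [← sub_eq_zero, ← geom_sum_mul, hsum, zero_mul]
  refine (hp.eq_one_or_self_of_dvd _ (orderOf_dvd_of_pow_eq_one hpow)).resolve_left fun h => ?_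
  rw [orderOf_eq_one_iff] at h
  simp [h] at hsum

namespace Matrix

variable {n K : Type*} [Fintype n] [DecidableEq n] [Field K]

theorem charpoly_eq_X_sub_C_pow_of_spectrum_subset [IsAlgClosed K] {A : Matrix n n K} {μ : K}
    (h : spectrum K A ⊆ {μ}) : A.charpoly = (X - C μ) ^ Fintype.card n := by
  have hroots : A.charpoly.roots = Multiset.replicate (Fintype.card n) μ := by
    refine Multiset.eq_replicate.2 ⟨?_, fun r hr => h ?_⟩
    · rw [← (IsAlgClosed.splits _).natDegree_eq_card_roots, charpoly_natDegree_eq_dim]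
    · exact mem_spectrum_iff_isRoot_charpoly.2 (isRoot_of_mem_roots hr)
  rw [(IsAlgClosed.splits _).eq_prod_roots_of_monic (charpoly_monic A), hroots,
    Multiset.map_replicate, Multiset.prod_replicate]

theorem pow_char_pow_card_eq_one_of_spectrum_subset (p : ℕ) [Fact p.Prime] [CharP K p]
    [IsAlgClosed K] {A : Matrix n n K} (h : spectrum K A ⊆ {1}) : A ^ p ^ Fintype.card n = 1 := by
  have hfrob : (X - C 1 : K[X]) ^ p ^ Fintype.card n = X ^ p ^ Fintype.card n - 1 := by
    rw [sub_pow_char_pow, ← C_pow, one_pow, map_one]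
  have hdvd : A.charpoly ∣ X ^ p ^ Fintype.card n - 1 := by
    rw [charpoly_eq_X_sub_C_pow_of_spectrum_subset h, ← hfrob]
    exact pow_dvd_pow _ (Nat.lt_pow_self (Fact.out : p.Prime).one_lt).le
  have := aeval_eq_zero_of_dvd_aeval_eq_zero hdvd (aeval_self_charpoly A)
  simpa [sub_eq_zero] using this

theorem exists_mem_spectrum_ne_one (p : ℕ) [Fact p.Prime] [CharP K p] [IsAlgClosed K]
    {A : Matrix n n K} (hcop : (orderOf A).Coprime p) (hA : A ≠ 1) :
    ∃ ζ ∈ spectrum K A, ζ ≠ 1 := by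
  by_contra! h
  have hpow := pow_char_pow_card_eq_one_of_spectrum_subset p fun ζ hζ => h ζ hζ
  exact hA <| orderOf_eq_one_iff.1 <|
    (hcop.pow_right _).eq_one_of_dvd (orderOf_dvd_of_pow_eq_one hpow)

theorem ncard_spectrum_le (A : Matrix n n K) : (spectrum K A).ncard ≤ Fintype.card n := by
  classical
  have : spectrum K A = A.charpoly.roots.toFinset := by
    ext x
    simp [mem_spectrum_iff_isRoot_charpoly, (charpoly_monic A).ne_zero]
  rw [this, Set.ncard_coe_finset, ← charpoly_natDegree_eq_dim A]
  exact (Multiset.toFinset_card_le _).trans (card_roots' A.charpoly)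

theorem pow_card_mem_spectrum_map {F : Type*} [Field F] [Fintype F] [Algebra F K]
    {M : Matrix n n F} {x : K} (hx : x ∈ spectrum K (M.map (algebraMap F K))) :
    x ^ Fintype.card F ∈ spectrum K (M.map (algebraMap F K)) := by
  rw [mem_spectrum_iff_isRoot_charpoly, charpoly_map, IsRoot.def, ← expand_eval, ← map_expand,
    FiniteField.expand_card, Polynomial.map_pow, eval_pow, ← charpoly_map,
    (mem_spectrum_iff_isRoot_charpoly.1 hx).eq_zero, zero_pow Fintype.card_ne_zero]

theorem pow_card_pow_mem_spectrum_map {F : Type*} [Field F] [Fintype F] [Algebra F K]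
    {M : Matrix n n F} {x : K} (hx : x ∈ spectrum K (M.map (algebraMap F K))) (i : ℕ) :
    x ^ Fintype.card F ^ i ∈ spectrum K (M.map (algebraMap F K)) := by
  induction i with
  | zero => simpa using hx
  | succ i ih => simpa only [pow_succ, pow_mul] using pow_card_mem_spectrum_map ih

end Matrix

namespace spectrum

variable {𝕜 A : Type*} [Field 𝕜] [Ring A] [Algebra 𝕜 A]

theorem pow_eq_one_of_mem [Nontrivial A] {a : A} {n : ℕ} (ha : a ^ n = 1) {ζ : 𝕜}
    (hζ : ζ ∈ spectrum 𝕜 a) : ζ ^ n = 1 := by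
  simpa [ha, spectrum.one_eq] using pow_mem_pow a n hζ

theorem pow_mem_of_pow_eq_units_conj {a u : Aˣ} {k : ℕ} (h : a ^ k = u * a * u⁻¹) {ζ : 𝕜}
    (hζ : ζ ∈ spectrum 𝕜 (a : A)) : ζ ^ k ∈ spectrum 𝕜 (a : A) := by
  simpa only [← Units.val_pow_eq_pow_val, h, Units.val_mul, units_conjugate]
    using pow_mem_pow (a : A) k hζ

end spectrum

theorem exists_modEq_pow_of_pow_mem {G : Type*} [Monoid G] {ζ : G} (hζ : IsOfFinOrder ζ)
    {p k : ℕ} {S : Set G} (hSfin : S.Finite) (hS : S.ncard ≤ orderOf (p : ZMod (orderOf ζ)))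
    (horbit : ∀ i, ζ ^ p ^ i ∈ S) (hk : ζ ^ k ∈ S) :
    ∃ j < orderOf (p : ZMod (orderOf ζ)), k ≡ p ^ j [MOD orderOf ζ] := by
  set n := orderOf (p : ZMod (orderOf ζ))
  have hinj : Set.InjOn (fun i => ζ ^ p ^ i) (Set.Iio n) := by
    intro i hi j hj hij
    refine pow_injOn_Iio_orderOf hi hj ?_
    simpa using (ZMod.natCast_eq_natCast_iff _ _ _).2 (hζ.pow_eq_pow_iff_modEq.1 hij)
  have horbit_eq : (fun i => ζ ^ p ^ i) '' Set.Iio n = S := by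
    refine Set.eq_of_subset_of_ncard_le (Set.image_subset_iff.2 fun i _ => horbit i) ?_ hSfin
    rwa [hinj.ncard_image, Set.ncard_Iio_nat]
  obtain ⟨j, hj, hjk⟩ := horbit_eq ▸ hk
  exact ⟨j, hj, (hζ.pow_eq_pow_iff_modEq.1 hjk).symm⟩

theorem stmt_11 (p q : ℕ) (hp : p.Prime) (hq : q.Prime)
    (hdvd : q ∣ ∑ i ∈ Finset.range p, p ^ i)
    (M : GL (Fin p) (ZMod p)) (hM : orderOf M = q)
    (A : GL (Fin p) (ZMod p)) (hA : A ∈ Subgroup.normalizer (Subgroup.zpowers M)) :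
    ∃ j : ℕ, j < p ∧ A * M * A⁻¹ = M ^ (p ^ j) := by
  have : Fact p.Prime := ⟨hp⟩
  have : Fact q.Prime := ⟨hq⟩
  have hqp : q ≠ p := fun h => Nat.not_dvd_geom_sum_self hp.ne_one hp.ne_zero (h ▸ hdvd)
  have hordp : orderOf (p : ZMod q) = p := ZMod.orderOf_natCast_eq_of_dvd_geom_sum hp hdvd
  obtain ⟨k, hk⟩ : ∃ k : ℕ, M ^ k = A * M * A⁻¹ :=
    (isOfFinOrder_of_finite M).mem_powers_iff_mem_zpowers.2
      ((Subgroup.mem_normalizer_iff.1 hA M).1 (Subgroup.mem_zpowers M))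
  let K := AlgebraicClosure (ZMod p)
  let φ := Matrix.GeneralLinearGroup.map (n := Fin p) (algebraMap (ZMod p) K)
  have hN : orderOf (φ M : Matrix (Fin p) (Fin p) K) = q := by
    rw [orderOf_units, orderOf_injective φ
      (Units.map_injective (Matrix.map_injective (algebraMap (ZMod p) K).injective)), hM]
  obtain ⟨ζ, hζ, hζ1⟩ := Matrix.exists_mem_spectrum_ne_one p
    (hN ▸ (Nat.coprime_primes hq hp).2 hqp)
    (fun h => hq.one_lt.ne' (by rw [← hN, h, orderOf_one]))
  have hζq : orderOf ζ = q :=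
    orderOf_eq_prime (spectrum.pow_eq_one_of_mem (hN ▸ pow_orderOf_eq_one _) hζ) hζ1
  have horbit (i : ℕ) : ζ ^ p ^ i ∈ spectrum K (φ M : Matrix (Fin p) (Fin p) K) := by
    have := Matrix.pow_card_pow_mem_spectrum_map (M := (M : Matrix (Fin p) (Fin p) (ZMod p))) hζ i
    rwa [ZMod.card] at this
  have hζk : ζ ^ k ∈ spectrum K (φ M : Matrix (Fin p) (Fin p) K) :=
    spectrum.pow_mem_of_pow_eq_units_conj (by rw [← map_pow, hk, map_mul, map_mul, map_inv]) hζ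
  obtain ⟨j, hj, hkj⟩ := exists_modEq_pow_of_pow_mem
    (orderOf_pos_iff.1 (hζq ▸ hq.pos))
    (Matrix.finite_spectrum _)
    (by rw [hζq, hordp]; exact (Matrix.ncard_spectrum_le _).trans_eq (Fintype.card_fin p))
    horbit hζk
  rw [hζq, hordp] at hj
  exact ⟨j, hj, hk ▸ pow_eq_pow_iff_modEq.2 (hM ▸ hζq ▸ hkj)⟩
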